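/- arXiv:2605.21733 — 2 statements merged into one kernel-verified Lean document; each statement's English description precedes it below -/
import Mathlib

section
/- Let F be a star network of order n with internal vertices x₁,…,x_m, let π ∈ Π(F), and let k be an index such that π has a defect at x_k. Then the path family π̂ = φ_k(π) satisfies: (1) type(π̂) = type(π); and (2) for each p > k, the set {(i,j) | (π̂_i, π̂_j, p) is a defect} equals the set {(i,j) | (π_i, π_j, p) is a defect}. -/
/-!  Star networks, covering path families, crossings and defects,
     following Parisi–Skandera–Spahiu–Wang.

A star network of order `n` is a (possibly condensed) concatenation
`F_{[a₁,b₁]} ⋯ F_{[a_m,b_m]}` of simple star networks.  We model it by the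
sequence of intervals (`lo k`, `hi k`, levels `0,…,n-1` from bottom to top,
star `k` acting between stage `k` and stage `k+1`) together with a boolean
function recording, for each pair of internal vertices, whether the parallel
edges between them have been condensed into one multi-edge.  -/
structure StarNetwork (n : ℕ) where
  m : ℕ
  lo : Fin m → Fin n
  hi : Fin m → Fin n
  lo_le_hi : ∀ k, lo k ≤ hi k
  cond : Fin m → Fin m → Bool

namespace StarNetwork

variable {n : ℕ} (F : StarNetwork n)

/-- Level `c` belongs to the interval of the `k`-th star (stars are indexed
from `0`; for `k ≥ m` this is false). -/
def memI (k : ℕ) (c : Fin n) : Prop :=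
  ∃ h : k < F.m, F.lo ⟨k, h⟩ ≤ c ∧ c ≤ F.hi ⟨k, h⟩

/-- The set `I_{j,l}` of levels passing directly from internal vertex `x_j` to
internal vertex `x_l`; its cardinality is the number `μ(x_j,x_l)` of parallel
edges between `x_j` and `x_l` in the plain concatenation. -/
def Iset (j l : Fin F.m) : Finset (Fin n) :=
  ((Finset.Icc (F.lo j) (F.hi j)) ∩ (Finset.Icc (F.lo l) (F.hi l))) \
    ((Finset.Ioo j l).biUnion fun p => Finset.Icc (F.lo p) (F.hi p))

/-- A (raw) covering path family of the star network `F`: path `i` starts at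
source `i` (level `i` at stage `0`) and `traj i k` is the level of path `i`
after passing the first `k` stars.  A path not entering a star keeps its
level; the paths entering a star exit it on the levels of its interval;
distinct paths occupy distinct levels at every stage.  These conditions say
exactly that every edge of `F` lies on as many paths as its multiplicity. -/
structure Raw where
  traj : Fin n → ℕ → Fin n
  init : ∀ i, traj i 0 = i
  inj : ∀ k, Function.Injective fun i => traj i k
  step_out : ∀ i k, ¬ F.memI k (traj i k) → traj i (k + 1) = traj i k
  step_in : ∀ i k, F.memI k (traj i k) → F.memI k (traj i (k + 1))

namespace Raw

variable {F} (π : F.Raw)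

/-- The type of the path family: path `i` terminates at sink `ptype π i`. -/
noncomputable def ptype : Equiv.Perm (Fin n) :=
  Equiv.ofBijective (fun i => π.traj i F.m)
    (Finite.injective_iff_bijective.mp (π.inj F.m))

/-- Path `i` passes through (enters) the internal vertex `x_k`. -/
def enters (i : Fin n) (k : Fin F.m) : Prop :=
  F.lo k ≤ π.traj i k.val ∧ π.traj i k.val ≤ F.hi k

/-- Paths `i` and `j` enter `x_k` on the same (necessarily condensed) edge. -/
def sameEnter (i j : Fin n) (k : Fin F.m) : Prop :=
  π.enters i k ∧ π.enters j k ∧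
    ∃ p : Fin F.m, p < k ∧ F.cond p k = true ∧
      π.traj i k.val ∈ F.Iset p k ∧ π.traj j k.val ∈ F.Iset p k

/-- Paths `π_i` and `π_j` meet at `x_k`: `x_k` is the initial vertex of a
connected component of their intersection. -/
def meet (i j : Fin n) (k : Fin F.m) : Prop :=
  i ≠ j ∧ π.enters i k ∧ π.enters j k ∧ ¬ π.sameEnter i j k

/-- `π_i ≺_k π_j` : both paths enter `x_k` and `π_i` enters on a strictly
lower edge than `π_j`. -/
def precAt (i j : Fin n) (k : Fin F.m) : Prop :=
  π.enters i k ∧ π.enters j k ∧ ¬ π.sameEnter i j k ∧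
    π.traj i k.val < π.traj j k.val

/-- `π_i ∼_k π_j` : both paths enter `x_k` on the same edge. -/
def simAt (i j : Fin n) (k : Fin F.m) : Prop :=
  π.enters i k ∧ π.enters j k ∧ (i = j ∨ π.sameEnter i j k)

/-- `π_i ≾_k π_j`. -/
def precsimAt (i j : Fin n) (k : Fin F.m) : Prop :=
  π.precAt i j k ∨ π.simAt i j k

/-- Paths `i` and `j` travel together from `x_k` directly to `x_l` on a
common (condensed) edge. -/
def linked (i j : Fin n) (k l : Fin F.m) : Prop :=
  k < l ∧ F.cond k l = true ∧
    π.traj i (k.val + 1) ∈ F.Iset k l ∧ π.traj j (k.val + 1) ∈ F.Iset k l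

/-- `(x_k, …, x_l)` is a crossing of `π_i` and `π_j`: it is a connected
component of their intersection (it starts at a meeting vertex `x_k`, the two
paths stay together on condensed edges until `x_l`, and separate after `x_l`)
and the two paths enter `x_k` and exit `x_l` in different vertical orders. -/
def crossPair (i j : Fin n) (k l : Fin F.m) : Prop :=
  π.meet i j k ∧ Relation.ReflTransGen (π.linked i j) k l ∧
    (∀ l', ¬ π.linked i j l l') ∧
    ¬ ((π.traj i k.val < π.traj j k.val) ↔
        (π.traj i (l.val + 1) < π.traj j (l.val + 1)))

/-- The number of crossings of `π_i` and `π_j` occurring strictly before the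
internal vertex `x_k`. -/
noncomputable def crossBefore (i j : Fin n) (k : Fin F.m) : ℕ :=
  Set.ncard {pl : Fin F.m × Fin F.m | π.crossPair i j pl.1 pl.2 ∧ pl.2 < k}

/-- `(π_i, π_j, k)` is a defect of `π`: `i < j` and `π_i`, `π_j` meet at `x_k`
after having crossed an odd number of times. -/
def defect (i j : Fin n) (k : Fin F.m) : Prop :=
  i < j ∧ π.meet i j k ∧ Odd (π.crossBefore i j k)

/-- The number of defects of `π`. -/
noncomputable def dfct : ℕ :=
  Set.ncard {t : Fin n × Fin n × Fin F.m | π.defect t.1 t.2.1 t.2.2}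

end Raw

/-- Two raw families represent the same path family of `F` iff they differ
only in the distribution of paths among the strands of condensed edges. -/
def condRel (π σ : F.Raw) : Prop :=
  ∀ i k, π.traj i k = σ.traj i k ∨
    ∃ j l : Fin F.m, j.val ≤ k ∧ k < l.val ∧ F.cond j l = true ∧
      π.traj i k ∈ F.Iset j l ∧ σ.traj i k ∈ F.Iset j l

/-- `Π(F)`: the set (type) of covering path families of the star network `F`. -/
def PathFamily := Quot F.condRel

/-- The type of a path family. -/
noncomputable def PathFamily.typeQ (σ : F.PathFamily) : Equiv.Perm (Fin n) :=
  (Quot.out σ).ptype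

/-- The number of defects of a path family. -/
noncomputable def PathFamily.dfctQ (σ : F.PathFamily) : ℕ :=
  (Quot.out σ).dfct

end StarNetwork

/-! Along the paths, the vertical order of `π_i` and `π_j` can only change inside a
component of their intersection, and a component changes it exactly when it is a
crossing. So if the two paths meet at `x_p`, the parity of their crossings before `x_p`
records whether their orders at the sources and at stage `p` differ, and a defect at
`x_p` depends on the family only through the levels at stages `0` and `p`. The exchange
`φ_k` alters only the stages `l + 1, …, k`. -/

namespace StarNetwork

variable {n : ℕ} {F : StarNetwork n}

theorem memI_iff {k : Fin F.m} {c : Fin n} : F.memI k c ↔ F.lo k ≤ c ∧ c ≤ F.hi k :=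
  ⟨fun ⟨_, h⟩ => h, fun h => ⟨k.isLt, h⟩⟩

theorem mem_Iset {u v : Fin F.m} {c : Fin n} :
    c ∈ F.Iset u v ↔ ((F.lo u ≤ c ∧ c ≤ F.hi u) ∧ F.lo v ≤ c ∧ c ≤ F.hi v) ∧
      ∀ p, u < p → p < v → ¬ (F.lo p ≤ c ∧ c ≤ F.hi p) := by
  simp [Iset]

theorem lt_iff_lt_of_memI_of_not_memI {q : ℕ} {x y c : Fin n} (hx : F.memI q x) (hy : F.memI q y)
    (hc : ¬ F.memI q c) : (x < c ↔ y < c) ∧ (c < x ↔ c < y) := by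
  obtain ⟨hq, hx⟩ := hx
  have hy : F.lo ⟨q, hq⟩ ≤ y ∧ y ≤ F.hi ⟨q, hq⟩ := hy.2
  rcases not_and_or.mp fun h => hc ⟨hq, h⟩ with hc | hc <;>
  · refine ⟨⟨fun _ => ?_, fun _ => ?_⟩, ⟨fun _ => ?_, fun _ => ?_⟩⟩ <;> order

namespace Raw

variable (σ : F.Raw)

theorem traj_succ_eq_of_not_memI {x : Fin n} {q : ℕ} (h : ¬ F.memI q (σ.traj x (q + 1))) :
    σ.traj x (q + 1) = σ.traj x q :=
  σ.step_out x q fun hq => h (σ.step_in x q hq)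

theorem traj_eq_of_mem_Iset_succ {u v : Fin F.m} {x : Fin n}
    (hx : σ.traj x (u + 1) ∈ F.Iset u v) {q : ℕ} (hq : u + 1 ≤ q) (hqv : q ≤ v) :
    σ.traj x q = σ.traj x (u + 1) := by
  induction q, hq using Nat.le_induction with
  | base => rfl
  | succ q hq ih =>
    have ih := ih (by omega)
    rw [σ.step_out x q ?_, ih]
    rintro ⟨hqm, hc⟩
    exact (mem_Iset.1 hx).2 ⟨q, hqm⟩ (show (u : ℕ) < q by omega) (show q < (v : ℕ) by omega)
      (ih ▸ hc)

theorem traj_eq_of_mem_Iset {u v : Fin F.m} {x : Fin n}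
    (hx : σ.traj x v ∈ F.Iset u v) {q : ℕ} (hq : u + 1 ≤ q) (hqv : q ≤ v) :
    σ.traj x q = σ.traj x v := by
  induction hqv using Nat.decreasingInduction with
  | self => rfl
  | of_succ q hqv ih =>
    have ih := ih (by omega)
    rw [← σ.traj_succ_eq_of_not_memI, ih]
    rintro ⟨hqm, hc⟩
    exact (mem_Iset.1 hx).2 ⟨q, hqm⟩ (show (u : ℕ) < q by omega) hqv (ih ▸ hc)

variable {σ} {i j : Fin n}

theorem sameEnter_of_linked {u v : Fin F.m} (h : σ.linked i j u v) : σ.sameEnter i j v := by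
  obtain ⟨huv, hcond, hi, hj⟩ := h
  rw [← σ.traj_eq_of_mem_Iset_succ hi huv le_rfl] at hi
  rw [← σ.traj_eq_of_mem_Iset_succ hj huv le_rfl] at hj
  exact ⟨(mem_Iset.1 hi).1.2, (mem_Iset.1 hj).1.2, u, huv, hcond, hi, hj⟩

theorem not_enters_of_linked {u v p : Fin F.m} (h : σ.linked i j u v) (hup : u < p)
    (hpv : p < v) : ¬ σ.enters i p := by
  have hi := h.2.2.1
  rw [enters, σ.traj_eq_of_mem_Iset_succ hi hup hpv.le]
  exact (mem_Iset.1 hi).2 p hup hpv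

theorem enters_of_linked {u v : Fin F.m} (h : σ.linked i j u v) :
    σ.enters i u ∧ σ.enters j u := by
  have key : ∀ x, σ.traj x (u + 1) ∈ F.Iset u v → σ.enters x u := fun x hx => by
    by_contra hu
    have hxu := (mem_Iset.1 hx).1.1
    rw [σ.step_out x u (mt memI_iff.1 hu)] at hxu
    exact hu hxu
  exact ⟨key i h.2.2.1, key j h.2.2.2⟩

theorem linked_rightUnique : Relator.RightUnique (σ.linked i j) := by
  intro u v v' h h'
  by_contra hne
  rcases lt_or_gt_of_ne hne with hlt | hlt
  · exact (mem_Iset.1 h'.2.2.1).2 v h.1 hlt (mem_Iset.1 h.2.2.1).1.2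
  · exact (mem_Iset.1 h.2.2.1).2 v' h'.1 hlt (mem_Iset.1 h'.2.2.1).1.2

theorem le_of_reflTransGen_linked {a b : Fin F.m}
    (h : Relation.ReflTransGen (σ.linked i j) a b) : a ≤ b := by
  induction h with
  | refl => exact le_rfl
  | tail _ hl ih => exact ih.trans hl.1.le

theorem exists_linked_of_reflTransGen {a b p : Fin F.m}
    (h : Relation.ReflTransGen (σ.linked i j) a b) (hap : a < p) (hpb : p ≤ b) :
    ∃ u v, σ.linked i j u v ∧ u < p ∧ p ≤ v := by
  induction h with
  | refl => exact absurd hap (not_lt.2 hpb)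
  | @tail c d _ hl ih =>
    by_cases hpc : p ≤ c
    · exact ih hpc
    · exact ⟨c, d, hl, not_le.1 hpc, hpb⟩

theorem not_meet_of_linked {u v p : Fin F.m} (h : σ.linked i j u v) (hup : u < p)
    (hpv : p ≤ v) : ¬ σ.meet i j p := by
  rcases hpv.eq_or_lt with rfl | hpv
  · exact fun hm => hm.2.2.2 (sameEnter_of_linked h)
  · exact fun hm => not_enters_of_linked h hup hpv hm.2.1

variable (σ i j) in
def IsComponent (a b : Fin F.m) : Prop :=
  σ.meet i j a ∧ Relation.ReflTransGen (σ.linked i j) a b ∧ ∀ l', ¬ σ.linked i j b l'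

theorem crossPair_iff {a b : Fin F.m} : σ.crossPair i j a b ↔ σ.IsComponent i j a b ∧
    ¬ (σ.traj i a < σ.traj j a ↔ σ.traj i (b + 1) < σ.traj j (b + 1)) := by
  simp only [crossPair, IsComponent, and_assoc]

namespace IsComponent

theorem le {a b : Fin F.m} (h : σ.IsComponent i j a b) : a ≤ b :=
  le_of_reflTransGen_linked h.2.1

theorem not_meet {a b p : Fin F.m} (h : σ.IsComponent i j a b) (hap : a < p) (hpb : p ≤ b) :
    ¬ σ.meet i j p := by
  obtain ⟨u, v, hl, hup, hpv⟩ := exists_linked_of_reflTransGen h.2.1 hap hpb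
  exact not_meet_of_linked hl hup hpv

theorem lt_of_meet {a b p : Fin F.m} (h : σ.IsComponent i j a b) (hp : σ.meet i j p)
    (hap : a < p) : b < p :=
  not_le.1 fun hpb => h.not_meet hap hpb hp

theorem eq_of_le_of_le {a b a' b' : Fin F.m} (h : σ.IsComponent i j a b)
    (h' : σ.IsComponent i j a' b') (haa' : a ≤ a') (ha'b : a' ≤ b) : a = a' ∧ b = b' := by
  rcases haa'.eq_or_lt with rfl | haa'
  · refine ⟨rfl, ?_⟩
    have terminal : ∀ {c d}, (∀ l', ¬ σ.linked i j c l') →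
        Relation.ReflTransGen (σ.linked i j) c d → c = d := fun hc hcd =>
      (Relation.ReflTransGen.cases_head hcd).elim id fun ⟨e, he, _⟩ => absurd he (hc e)
    rcases h.2.1.total_of_right_unique linked_rightUnique h'.2.1 with hbb' | hb'b
    · exact terminal h.2.2 hbb'
    · exact (terminal h'.2.2 hb'b).symm
  · exact absurd h'.1 (h.not_meet haa' ha'b)

theorem eq_or_lt_of_last {a b a' b' p : Fin F.m} (h : σ.IsComponent i j a b)
    (hlast : ∀ a' b', σ.IsComponent i j a' b' → b' < p → b' ≤ b)
    (h' : σ.IsComponent i j a' b') (hb'p : b' < p) : (a' = a ∧ b' = b) ∨ b' < a := by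
  rcases lt_or_ge b' a with hb'a | hab'
  · exact Or.inr hb'a
  · refine Or.inl ?_
    rcases le_total a a' with haa' | ha'a
    · obtain ⟨rfl, rfl⟩ := h.eq_of_le_of_le h' haa' (h'.le.trans (hlast a' b' h' hb'p))
      exact ⟨rfl, rfl⟩
    · exact h'.eq_of_le_of_le h ha'a hab'

end IsComponent

theorem exists_meet_reflTransGen (hij : i ≠ j) {q : Fin F.m} (hi : σ.enters i q)
    (hj : σ.enters j q) : ∃ a, σ.meet i j a ∧ Relation.ReflTransGen (σ.linked i j) a q := by
  classical
  obtain ⟨a, ha, hmin⟩ := (Finset.univ.filter fun a => σ.enters i a ∧ σ.enters j a ∧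
    Relation.ReflTransGen (σ.linked i j) a q).exists_min_image id
      ⟨q, by simp [hi, hj, Relation.ReflTransGen.refl]⟩
  simp only [Finset.mem_filter, Finset.mem_univ, true_and] at ha hmin
  obtain ⟨hia, hja, haq⟩ := ha
  refine ⟨a, ⟨hij, hia, hja, fun hs => ?_⟩, haq⟩
  obtain ⟨-, -, p, hpa, hcond, hip, hjp⟩ := hs
  have hl : σ.linked i j p a := ⟨hpa, hcond,
    (σ.traj_eq_of_mem_Iset hip le_rfl hpa).symm ▸ hip,
    (σ.traj_eq_of_mem_Iset hjp le_rfl hpa).symm ▸ hjp⟩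
  exact absurd (hmin p ⟨(enters_of_linked hl).1, (enters_of_linked hl).2, haq.head hl⟩)
    (not_le.2 hpa)

theorem exists_reflTransGen_terminal (q : Fin F.m) :
    ∃ b, Relation.ReflTransGen (σ.linked i j) q b ∧ ∀ l', ¬ σ.linked i j b l' := by
  classical
  obtain ⟨b, hb, hmax⟩ := (Finset.univ.filter fun b =>
    Relation.ReflTransGen (σ.linked i j) q b).exists_max_image id
      ⟨q, by simp [Relation.ReflTransGen.refl]⟩
  simp only [Finset.mem_filter, Finset.mem_univ, true_and] at hb hmax
  exact ⟨b, hb, fun l' hl => absurd (hmax l' (hb.tail hl)) (not_le.2 hl.1)⟩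

theorem exists_isComponent (hij : i ≠ j) {q : Fin F.m} (hi : σ.enters i q)
    (hj : σ.enters j q) : ∃ a b, σ.IsComponent i j a b ∧ a ≤ q ∧ q ≤ b := by
  obtain ⟨a, hma, haq⟩ := exists_meet_reflTransGen hij hi hj
  obtain ⟨b, hqb, hb⟩ := exists_reflTransGen_terminal (σ := σ) (i := i) (j := j) q
  exact ⟨a, b, ⟨hma, haq.trans hqb, hb⟩, le_of_reflTransGen_linked haq,
    le_of_reflTransGen_linked hqb⟩

theorem traj_lt_traj_succ_iff {q : ℕ}
    (hq : ¬ (F.memI q (σ.traj i q) ∧ F.memI q (σ.traj j q))) :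
    σ.traj i (q + 1) < σ.traj j (q + 1) ↔ σ.traj i q < σ.traj j q := by
  by_cases hi : F.memI q (σ.traj i q)
  · have hj := fun h => hq ⟨hi, h⟩
    rw [σ.step_out j q hj]
    exact (lt_iff_lt_of_memI_of_not_memI (σ.step_in i q hi) hi hj).1
  · rw [σ.step_out i q hi]
    by_cases hj : F.memI q (σ.traj j q)
    · exact (lt_iff_lt_of_memI_of_not_memI (σ.step_in j q hj) hj hi).2
    · rw [σ.step_out j q hj]

theorem traj_lt_traj_iff_of_disjoint (hij : i ≠ j) {q q' : ℕ} (hqq' : q ≤ q')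
    (h : ∀ a b, σ.IsComponent i j a b → (b : ℕ) < q ∨ q' ≤ a) :
    σ.traj i q' < σ.traj j q' ↔ σ.traj i q < σ.traj j q := by
  induction q', hqq' using Nat.le_induction with
  | base => rfl
  | succ r hqr ih =>
    rw [traj_lt_traj_succ_iff, ih fun a b hab => (h a b hab).imp_right (by omega)]
    rintro ⟨⟨hr, hi⟩, ⟨_, hj⟩⟩
    obtain ⟨a, b, hab, har, hrb⟩ := exists_isComponent (q := ⟨r, hr⟩) hij hi hj
    have := h a b hab
    simp only [Fin.le_def] at har hrb
    omega

theorem exists_last_isComponent {p : Fin F.m} (h : ∃ a b, σ.IsComponent i j a b ∧ b < p) :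
    ∃ a b, σ.IsComponent i j a b ∧ b < p ∧
      ∀ a' b', σ.IsComponent i j a' b' → b' < p → b' ≤ b := by
  classical
  obtain ⟨a, b, hab, hbp⟩ := h
  obtain ⟨⟨a, b⟩, hmem, hmax⟩ := (Finset.univ.filter fun c : Fin F.m × Fin F.m =>
    σ.IsComponent i j c.1 c.2 ∧ c.2 < p).exists_max_image Prod.snd
      ⟨(a, b), by simpa using ⟨hab, hbp⟩⟩
  simp only [Finset.mem_filter, Finset.mem_univ, true_and, Prod.forall] at hmem hmax
  exact ⟨a, b, hmem.1, hmem.2, fun a' b' h' hb' => hmax a' b' ⟨h', hb'⟩⟩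

theorem crossBefore_eq_zero {p : Fin F.m} (h : ∀ a b, σ.IsComponent i j a b → p ≤ b) :
    σ.crossBefore i j p = 0 := by
  rw [crossBefore, Set.ncard_eq_zero]
  ext ⟨a, b⟩
  simp only [Set.mem_ofPred_eq, Set.mem_empty_iff_false, iff_false, not_and, not_lt]
  exact fun hx => h a b (crossPair_iff.1 hx).1

theorem crossBefore_eq_succ_of_last {a b p : Fin F.m} (hab : σ.IsComponent i j a b)
    (hbp : b < p) (hlast : ∀ a' b', σ.IsComponent i j a' b' → b' < p → b' ≤ b)
    (hx : σ.crossPair i j a b) : σ.crossBefore i j p = σ.crossBefore i j a + 1 := by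
  unfold crossBefore
  rw [← Set.ncard_insert_of_notMem (a := (a, b)) (by simp [hab.le])]
  congr 1
  ext ⟨a', b'⟩
  simp only [Set.mem_ofPred_eq, Set.mem_insert_iff, Prod.mk.injEq]
  constructor
  · rintro ⟨hx', hb'⟩
    exact (hab.eq_or_lt_of_last hlast (crossPair_iff.1 hx').1 hb').imp id (⟨hx', ·⟩)
  · rintro (⟨rfl, rfl⟩ | ⟨hx', hb'⟩)
    · exact ⟨hx, hbp⟩
    · exact ⟨hx', hb'.trans (hab.le.trans_lt hbp)⟩

theorem crossBefore_eq_of_last {a b p : Fin F.m} (hab : σ.IsComponent i j a b)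
    (hbp : b < p) (hlast : ∀ a' b', σ.IsComponent i j a' b' → b' < p → b' ≤ b)
    (hx : ¬ σ.crossPair i j a b) : σ.crossBefore i j p = σ.crossBefore i j a := by
  unfold crossBefore
  congr 1
  ext ⟨a', b'⟩
  simp only [Set.mem_ofPred_eq]
  constructor
  · rintro ⟨hx', hb'⟩
    rcases hab.eq_or_lt_of_last hlast (crossPair_iff.1 hx').1 hb' with ⟨rfl, rfl⟩ | hb'a
    · exact absurd hx' hx
    · exact ⟨hx', hb'a⟩
  · rintro ⟨hx', hb'⟩
    exact ⟨hx', hb'.trans (hab.le.trans_lt hbp)⟩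

theorem odd_crossBefore_iff (hij : i ≠ j) (p : Fin F.m)
    (hp : ∀ a b, σ.IsComponent i j a b → a < p → b < p) :
    Odd (σ.crossBefore i j p) ↔
      ¬ (σ.traj i 0 < σ.traj j 0 ↔ σ.traj i p < σ.traj j p) := by
  induction p using WellFoundedLT.induction with
  | _ p ih =>
  by_cases hcomp : ∃ a b, σ.IsComponent i j a b ∧ b < p
  · obtain ⟨a, b, hab, hbp, hlast⟩ := exists_last_isComponent hcomp
    have iha := ih a (hab.le.trans_lt hbp) fun _ _ h ha => h.lt_of_meet hab.1 ha
    have hord : σ.traj i p < σ.traj j p ↔ σ.traj i (b + 1) < σ.traj j (b + 1) := by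
      refine traj_lt_traj_iff_of_disjoint hij hbp fun a' b' h' => ?_
      by_cases hb'p : b' < p
      · exact Or.inl (Nat.lt_succ_of_le (hlast a' b' h' hb'p))
      · exact Or.inr (not_lt.1 (mt (hp a' b' h') hb'p))
    rw [hord]
    by_cases hx : σ.crossPair i j a b
    · rw [crossBefore_eq_succ_of_last hab hbp hlast hx, Nat.odd_add_one, iha]
      have := (crossPair_iff.1 hx).2
      tauto
    · rw [crossBefore_eq_of_last hab hbp hlast hx, iha]
      have := not_not.1 fun hflip => hx (crossPair_iff.2 ⟨hab, hflip⟩)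
      tauto
  · simp only [not_exists, not_and, not_lt] at hcomp
    rw [crossBefore_eq_zero hcomp, traj_lt_traj_iff_of_disjoint hij (Nat.zero_le _)
      fun a b h => Or.inr (not_lt.1 (mt (hp a b h) (hcomp a b h).not_gt))]
    simp

theorem defect_iff {p : Fin F.m} : σ.defect i j p ↔
    i < j ∧ σ.meet i j p ∧ ¬ (σ.traj i 0 < σ.traj j 0 ↔ σ.traj i p < σ.traj j p) :=
  and_congr_right fun _ => and_congr_right fun hm =>
    odd_crossBefore_iff hm.1 p fun _ _ h => h.lt_of_meet hm

theorem defect_congr {τ : F.Raw} {p : Fin F.m} (h : ∀ x, σ.traj x p = τ.traj x p) :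
    σ.defect i j p ↔ τ.defect i j p := by
  simp only [defect_iff, meet, sameEnter, enters, σ.init, τ.init, h]

end Raw

end StarNetwork

theorem phi_preserves_type_and_later_defects_general
    {n : ℕ} (F : StarNetwork n) (π : F.Raw) (k : Fin F.m)
    (t : Fin n)
    (s : Fin n)
    (l : Fin F.m)
    -- `π̂ = φ_k(π)` is obtained from `π` by exchanging the `x_l`-to-`x_k`
    -- subpaths of `π_s` and `π_t` (step 4)
    (πh : F.Raw)
    (htraj : ∀ (i : Fin n) (q : ℕ), πh.traj i q =
      if i = s ∧ l.val + 1 ≤ q ∧ q ≤ k.val then π.traj t q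
      else if i = t ∧ l.val + 1 ≤ q ∧ q ≤ k.val then π.traj s q
      else π.traj i q) :
    πh.ptype = π.ptype ∧
      ∀ p : Fin F.m, k < p → ∀ i j : Fin n,
        (πh.defect i j p ↔ π.defect i j p) := by
  have hlater : ∀ x (q : ℕ), k < q → πh.traj x q = π.traj x q := fun x q hq => by
    simp [htraj, show ¬ q ≤ k by omega]
  exact ⟨Equiv.ext fun x => hlater x F.m k.isLt,
    fun p hp _ _ => StarNetwork.Raw.defect_congr fun x => hlater x p hp⟩

/-- **Proposition 4.2** (Parisi–Skandera–Spahiu–Wang).  Given a star network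
`F`, a covering path family `π ∈ Π(F)` and an index `k` such that `π` has a
defect at `x_k`, the path family `π̂ = φ_k(π)` produced by
Algorithm 4.1 satisfies (1) `type(π̂) = type(π)` and (2) for each `p > k`,
`{(i,j) | (π̂_i, π̂_j, p) defective} = {(i,j) | (π_i, π_j, p) defective}`. -/
theorem phi_preserves_type_and_later_defects
    {n : ℕ} (F : StarNetwork n) (π : F.Raw) (k : Fin F.m)
    -- `π` has a defect at `x_k`, and `(r,t)` is the lexicographically least
    -- pair with `(π_r, π_t, k)` a defect (step 1)
    (r t : Fin n) (hrt : π.defect r t k)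
    (hrtmin : ∀ r' t' : Fin n, π.defect r' t' k →
      r < r' ∨ (r = r' ∧ t ≤ t'))
    -- `s` is the largest index such that `π_s` enters `x_k` through the same
    -- edge as `π_r` and `(π_s, π_t, k)` is a defect (step 2)
    (s : Fin n) (hsr : π.simAt s r k) (hst : π.defect s t k)
    (hsmax : ∀ s' : Fin n, π.simAt s' r k → π.defect s' t k → s' ≤ s)
    -- `x_l` is the final vertex of the rightmost crossing of `π_s` and `π_t`
    -- prior to `x_k` (step 3)
    (l : Fin F.m) (hlcross : ∃ p, π.crossPair s t p l) (hlk : l < k)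
    (hlmax : ∀ p' l' : Fin F.m, π.crossPair s t p' l' → l' < k → l' ≤ l)
    -- `π̂ = φ_k(π)` is obtained from `π` by exchanging the `x_l`-to-`x_k`
    -- subpaths of `π_s` and `π_t` (step 4)
    (πh : F.Raw)
    (htraj : ∀ (i : Fin n) (q : ℕ), πh.traj i q =
      if i = s ∧ l.val + 1 ≤ q ∧ q ≤ k.val then π.traj t q
      else if i = t ∧ l.val + 1 ≤ q ∧ q ≤ k.val then π.traj s q
      else π.traj i q) :
    πh.ptype = π.ptype ∧
      ∀ p : Fin F.m, k < p → ∀ i j : Fin n,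
        (πh.defect i j p ↔ π.defect i j p) :=
  phi_preserves_type_and_later_defects_general F π k t s l πh htraj
end

section
/- With F, π, k, s, t, π̂ = φ_k(π), and the map ψ: D(π) → D(π̂) as specified (ψ(π_i,π_j,k) = (π̂_i,π̂_j,k) on A ∪ B, ψ(π_s,π_j,k) = (π̂_t,π̂_j,k) on C₁, ψ(π_i,π_t,k) = (π̂_i,π̂_s,k) on C₂), the map ψ is injective. -/
namespace StarNetwork
namespace Raw

variable {n : ℕ} {F : StarNetwork n}

/-- `D(π)` (at the vertex `x_k`, relative to the indices `s`, `t`): the set of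
index pairs of defects `(π_i, π_j, k)` of `π` at `x_k` having exactly one of
`i`, `j` in `{s, t}`. -/
def Dset (π : F.Raw) (k : Fin F.m) (s t : Fin n) : Set (Fin n × Fin n) :=
  {p | π.defect p.1 p.2 k ∧ Xor' (p.1 = s ∨ p.1 = t) (p.2 = s ∨ p.2 = t)}

/-- The block `A = { (π_i,π_j,k) ∈ D(π) | π_j ≺_k π_t }` (its primed analogue
`A'` is obtained by applying this to `π̂` with `s` and `t` interchanged). -/
def blockA (π : F.Raw) (k : Fin F.m) (s t : Fin n) : Set (Fin n × Fin n) :=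
  {p ∈ π.Dset k s t | π.precAt p.2 t k}

/-- The block `B = { (π_i,π_j,k) ∈ D(π) | π_s ≺_k π_i }`. -/
def blockB (π : F.Raw) (k : Fin F.m) (s t : Fin n) : Set (Fin n × Fin n) :=
  {p ∈ π.Dset k s t | π.precAt s p.1 k}

/-- The block
`C₁ = { (π_i,π_j,k) ∈ D(π) | π_t ≾_k π_j ≺_k π_i = π_s and π_t ≠ π_j }`. -/
def blockC1 (π : F.Raw) (k : Fin F.m) (s t : Fin n) : Set (Fin n × Fin n) :=
  {p ∈ π.Dset k s t |
    p.1 = s ∧ π.precsimAt t p.2 k ∧ π.precAt p.2 s k ∧ p.2 ≠ t}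

/-- The block
`C₂ = { (π_i,π_j,k) ∈ D(π) | π_t = π_j ≺_k π_i ≾_k π_s and π_i ≠ π_s }`. -/
def blockC2 (π : F.Raw) (k : Fin F.m) (s t : Fin n) : Set (Fin n × Fin n) :=
  {p ∈ π.Dset k s t |
    p.2 = t ∧ π.precAt t p.1 k ∧ π.precsimAt p.1 s k ∧ p.1 ≠ s}

/-- The map `ψ : D(π) → D(π̂)`:  `(i,j) ↦ (i,j)` on `A ∪ B`,
`(s,j) ↦ (t,j)` on `C₁`, and `(i,t) ↦ (i,s)` on `C₂`. -/
noncomputable def psiMap (π : F.Raw) (k : Fin F.m) (s t : Fin n) :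
    Fin n × Fin n → Fin n × Fin n := fun p =>
  open Classical in
  if p ∈ π.blockC1 k s t then (t, p.2)
  else if p ∈ π.blockC2 k s t then (p.1, s)
  else p

end Raw
end StarNetwork

namespace StarNetwork

lemma mem_Iset_iff {n : ℕ} {F : StarNetwork n} {p l : Fin F.m} {c : Fin n} :
    c ∈ F.Iset p l ↔ ((F.lo p ≤ c ∧ c ≤ F.hi p) ∧ (F.lo l ≤ c ∧ c ≤ F.hi l)) ∧
      ∀ x : Fin F.m, p < x → x < l → ¬(F.lo x ≤ c ∧ c ≤ F.hi x) := by
  simp only [Iset, Finset.mem_sdiff, Finset.mem_inter, Finset.mem_Icc, Finset.mem_biUnion,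
    Finset.mem_Ioo, not_exists, not_and]
  constructor
  · rintro ⟨⟨⟨h1, h2⟩, h3, h4⟩, h5⟩
    exact ⟨⟨⟨h1, h2⟩, h3, h4⟩, fun x hx1 hx2 hc1 hc2 => h5 x ⟨hx1, hx2⟩ hc1 hc2⟩
  · rintro ⟨⟨⟨h1, h2⟩, h3, h4⟩, h5⟩
    exact ⟨⟨⟨h1, h2⟩, h3, h4⟩, fun x hx hc1 hc2 => h5 x hx.1 hx.2 hc1 hc2⟩

namespace Raw

variable {n : ℕ} {F : StarNetwork n} (π : F.Raw) (i j : Fin n)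

/-- Forward constancy along a (condensed) edge from `x_p` to `x_l`. -/
lemma traj_stay (a : ℕ) {p l : Fin F.m} (ha : p.val < a)
    (hmem : π.traj i a ∈ F.Iset p l) :
    ∀ b, a ≤ b → b ≤ l.val → π.traj i b = π.traj i a := by
  intro b hab hbl
  induction b, hab using Nat.le_induction with
  | base => rfl
  | succ b hb IH =>
    have hEq := IH (by omega)
    have hmb : π.traj i b ∈ F.Iset p l := by rw [hEq]; exact hmem
    have hnm : ¬ F.memI b (π.traj i b) := by
      rintro ⟨hbm, hlo, hhi⟩
      exact (mem_Iset_iff.mp hmb).2 ⟨b, hbm⟩ (Fin.lt_def.mpr (show p.val < b by omega))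
        (Fin.lt_def.mpr (show b < l.val by omega)) ⟨hlo, hhi⟩
    rw [π.step_out i b hnm]; exact hEq

/-- Backward constancy along a (condensed) edge from `x_p` to `x_l`. -/
lemma traj_stay_back (a : ℕ) {p l : Fin F.m} (ha : p.val < a) :
    ∀ b, a ≤ b → b ≤ l.val → π.traj i b ∈ F.Iset p l → π.traj i a = π.traj i b := by
  intro b hab hbl hmem
  induction b, hab using Nat.le_induction with
  | base => rfl
  | succ b hb IH =>
    have hstep : π.traj i (b + 1) = π.traj i b := by
      apply π.step_out
      intro hmI
      obtain ⟨hbm, hlo, hhi⟩ := π.step_in i b hmI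
      exact (mem_Iset_iff.mp hmem).2 ⟨b, hbm⟩ (Fin.lt_def.mpr (show p.val < b by omega))
        (Fin.lt_def.mpr (show b < l.val by omega)) ⟨hlo, hhi⟩
    rw [hstep] at hmem
    rw [hstep]; exact IH (by omega) hmem

lemma linked_mem_end {p l : Fin F.m} (h : π.linked i j p l) :
    π.traj i l.val ∈ F.Iset p l ∧ π.traj j l.val ∈ F.Iset p l := by
  obtain ⟨hpl, hc, hmi, hmj⟩ := h
  have hplv : p.val < l.val := hpl
  constructor
  · rw [π.traj_stay i (p.val + 1) (Nat.lt_succ_self _) hmi l.val (by omega) le_rfl]; exact hmi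
  · rw [π.traj_stay j (p.val + 1) (Nat.lt_succ_self _) hmj l.val (by omega) le_rfl]; exact hmj

lemma linked_enters_end {p l : Fin F.m} (h : π.linked i j p l) :
    π.enters i l ∧ π.enters j l := by
  obtain ⟨h1, h2⟩ := π.linked_mem_end i j h
  exact ⟨(mem_Iset_iff.mp h1).1.2, (mem_Iset_iff.mp h2).1.2⟩

lemma linked_sameEnter {p l : Fin F.m} (h : π.linked i j p l) :
    π.sameEnter i j l := by
  obtain ⟨h1, h2⟩ := π.linked_mem_end i j h
  exact ⟨(mem_Iset_iff.mp h1).1.2, (mem_Iset_iff.mp h2).1.2, p, h.1, h.2.1, h1, h2⟩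

lemma linked_enters_start {p l : Fin F.m} (h : π.linked i j p l) :
    π.enters i p ∧ π.enters j p := by
  obtain ⟨hpl, hc, hmi, hmj⟩ := h
  have key : ∀ a : Fin n, π.traj a (p.val + 1) ∈ F.Iset p l → π.enters a p := by
    intro a hma
    have hIcc := (mem_Iset_iff.mp hma).1.1
    by_contra hne
    have hnm : ¬ F.memI p.val (π.traj a p.val) := by
      rintro ⟨hm, hlo, hhi⟩
      exact hne ⟨hlo, hhi⟩
    have hso := π.step_out a p.val hnm
    rw [hso] at hIcc
    exact hne hIcc
  exact ⟨key i hmi, key j hmj⟩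

lemma linked_back_unique {p p' l : Fin F.m} (h1 : π.linked i j p l)
    (h2 : π.linked i j p' l) : p = p' := by
  by_contra hne
  have hm1 := (π.linked_mem_end i j h1).1
  have hm2 := (π.linked_mem_end i j h2).1
  rcases lt_trichotomy p p' with h | h | h
  · exact (mem_Iset_iff.mp hm1).2 p' h h2.1 ⟨(mem_Iset_iff.mp hm2).1.1.1, (mem_Iset_iff.mp hm2).1.1.2⟩
  · exact hne h
  · exact (mem_Iset_iff.mp hm2).2 p h h1.1 ⟨(mem_Iset_iff.mp hm1).1.1.1, (mem_Iset_iff.mp hm1).1.1.2⟩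

lemma sameEnter_linked {v : Fin F.m} (h : π.sameEnter i j v) :
    ∃ p, π.linked i j p v := by
  obtain ⟨hei, hej, p, hpv, hc, hmi, hmj⟩ := h
  have hpv' : p.val < v.val := hpv
  refine ⟨p, hpv, hc, ?_, ?_⟩
  · rw [π.traj_stay_back i (p.val + 1) (Nat.lt_succ_self _) v.val (by omega) le_rfl hmi]; exact hmi
  · rw [π.traj_stay_back j (p.val + 1) (Nat.lt_succ_self _) v.val (by omega) le_rfl hmj]; exact hmj

lemma meet_no_incoming {p v : Fin F.m} (hm : π.meet i j v) (h : π.linked i j p v) : False :=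
  hm.2.2.2 (π.linked_sameEnter i j h)

lemma chain_le {a b : Fin F.m} (h : Relation.ReflTransGen (π.linked i j) a b) : a ≤ b := by
  induction h with
  | refl => exact le_rfl
  | tail _ hbc ih => exact le_trans ih (le_of_lt hbc.1)

lemma chain_start_unique (c a b : Fin F.m)
    (h1 : Relation.ReflTransGen (π.linked i j) a c)
    (h2 : Relation.ReflTransGen (π.linked i j) b c)
    (ma : π.meet i j a) (mb : π.meet i j b) : a = b := by
  suffices H : ∀ N : ℕ, ∀ c : Fin F.m, c.val < N →
      ∀ a b, Relation.ReflTransGen (π.linked i j) a c →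
        Relation.ReflTransGen (π.linked i j) b c →
        π.meet i j a → π.meet i j b → a = b by
    exact H (c.val + 1) c (Nat.lt_succ_self _) a b h1 h2 ma mb
  intro N
  induction N with
  | zero => intro c hc; omega
  | succ N IH =>
    intro c hc a b h1 h2 ma mb
    rcases Relation.ReflTransGen.cases_tail h1 with hca | ⟨y, hay, hyc⟩
    · rcases Relation.ReflTransGen.cases_tail h2 with hcb | ⟨z, hbz, hzc⟩
      · rw [← hca, ← hcb]
      · exact absurd (hca ▸ hzc) (fun hh => π.meet_no_incoming i j ma hh)
    · rcases Relation.ReflTransGen.cases_tail h2 with hcb | ⟨z, hbz, hzc⟩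
      · exact absurd (hcb ▸ hyc) (fun hh => π.meet_no_incoming i j mb hh)
      · have hyz : y = z := π.linked_back_unique i j hyc hzc
        have hyv : y.val < N := by
          have : y.val < c.val := hyc.1
          omega
        exact IH y hyv a b hay (hyz ▸ hbz) ma mb

lemma chain_cover {a c : Fin F.m} (h : Relation.ReflTransGen (π.linked i j) a c) :
    ∀ x : Fin F.m, a ≤ x → x ≤ c →
      Relation.ReflTransGen (π.linked i j) x c ∨
        ∃ p l, π.linked i j p l ∧ p < x ∧ x < l ∧
          Relation.ReflTransGen (π.linked i j) l c := by
  induction h using Relation.ReflTransGen.head_induction_on with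
  | refl =>
    intro x h1 h2
    have : x = c := le_antisymm h2 h1
    subst this; exact Or.inl Relation.ReflTransGen.refl
  | head hab hbc IH =>
    intro x hax hxc
    rcases eq_or_lt_of_le hax with heq | hax'
    · subst heq
      exact Or.inl (Relation.ReflTransGen.head hab hbc)
    rcases le_or_gt _ x with hbx | hxb
    · exact IH x hbx hxc
    · exact Or.inr ⟨_, _, hab, hax', hxb, hbc⟩

lemma cross_end_enters {p l : Fin F.m} (h : π.crossPair i j p l) :
    π.enters i l ∧ π.enters j l := by
  obtain ⟨hm, hch, _, _⟩ := h
  rcases Relation.ReflTransGen.cases_tail hch with heq | ⟨y, _, hyl⟩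
  · rw [heq]; exact ⟨hm.2.1, hm.2.2.1⟩
  · exact π.linked_enters_end i j hyl

lemma backtrace (hij : i ≠ j) (v : Fin F.m) (hvi : π.enters i v) (hvj : π.enters j v) :
    ∃ p0, π.meet i j p0 ∧ Relation.ReflTransGen (π.linked i j) p0 v := by
  suffices H : ∀ N : ℕ, ∀ v : Fin F.m, v.val < N → π.enters i v → π.enters j v →
      ∃ p0, π.meet i j p0 ∧ Relation.ReflTransGen (π.linked i j) p0 v by
    exact H (v.val + 1) v (Nat.lt_succ_self _) hvi hvj
  intro N
  induction N with
  | zero => intro v hv; omega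
  | succ N IH =>
    intro v hv hvi hvj
    by_cases hse : π.sameEnter i j v
    · obtain ⟨p, hlk⟩ := π.sameEnter_linked i j hse
      obtain ⟨hpi, hpj⟩ := π.linked_enters_start i j hlk
      have hpv : p.val < N := by
        have : p.val < v.val := hlk.1
        omega
      obtain ⟨p0, hm, hch⟩ := IH p hpv hpi hpj
      exact ⟨p0, hm, hch.tail hlk⟩
    · exact ⟨v, ⟨hij, hvi, hvj, hse⟩, Relation.ReflTransGen.refl⟩

/-- If not both paths enter star `q`, their vertical order is unchanged. -/
lemma ord_stable (q : ℕ) (h : ¬ (F.memI q (π.traj i q) ∧ F.memI q (π.traj j q))) :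
    (π.traj i (q + 1) < π.traj j (q + 1) ↔ π.traj i q < π.traj j q) := by
  by_cases hi' : F.memI q (π.traj i q) <;> by_cases hj' : F.memI q (π.traj j q)
  · exact absurd ⟨hi', hj'⟩ h
  · have hj2 := π.step_out j q hj'
    obtain ⟨hm, hlo, hhi⟩ := hi'
    obtain ⟨hm2, hlo', hhi'⟩ := π.step_in i q ⟨hm, hlo, hhi⟩
    rw [hj2]
    have hb : ¬ (F.lo ⟨q, hm⟩ ≤ π.traj j q ∧ π.traj j q ≤ F.hi ⟨q, hm⟩) :=
      fun hh => hj' ⟨hm, hh⟩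
    rcases le_or_gt (F.lo ⟨q, hm⟩) (π.traj j q) with h1 | h1
    · have h2 : F.hi ⟨q, hm⟩ < π.traj j q := by
        by_contra h3
        exact hb ⟨h1, le_of_not_gt h3⟩
      exact iff_of_true (lt_of_le_of_lt hhi' h2) (lt_of_le_of_lt hhi h2)
    · refine iff_of_false ?_ ?_
      · exact not_lt.mpr (le_of_lt (lt_of_lt_of_le h1 hlo'))
      · exact not_lt.mpr (le_of_lt (lt_of_lt_of_le h1 hlo))
  · have hi2 := π.step_out i q hi'
    obtain ⟨hm, hlo, hhi⟩ := hj'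
    obtain ⟨hm2, hlo', hhi'⟩ := π.step_in j q ⟨hm, hlo, hhi⟩
    rw [hi2]
    have hb : ¬ (F.lo ⟨q, hm⟩ ≤ π.traj i q ∧ π.traj i q ≤ F.hi ⟨q, hm⟩) :=
      fun hh => hi' ⟨hm, hh⟩
    rcases le_or_gt (F.lo ⟨q, hm⟩) (π.traj i q) with h1 | h1
    · have h2 : F.hi ⟨q, hm⟩ < π.traj i q := by
        by_contra h3
        exact hb ⟨h1, le_of_not_gt h3⟩
      refine iff_of_false ?_ ?_
      · exact not_lt.mpr (le_of_lt (lt_of_le_of_lt hhi' h2))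
      · exact not_lt.mpr (le_of_lt (lt_of_le_of_lt hhi h2))
    · exact iff_of_true (lt_of_lt_of_le h1 hlo') (lt_of_lt_of_le h1 hlo)
  · rw [π.step_out i q hi', π.step_out j q hj']

/-- The pair `(i,j)` is not in the middle of a common condensed edge at stage `q`. -/
def sepAt (q : ℕ) : Prop :=
  ∀ p l : Fin F.m, π.linked i j p l → ¬ (p.val < q ∧ q ≤ l.val)

/-- The number of crossings of the pair before stage `q`. -/
noncomputable def ncross (q : ℕ) : ℕ :=
  Set.ncard {pl : Fin F.m × Fin F.m | π.crossPair i j pl.1 pl.2 ∧ pl.2.val < q}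

lemma sep_of_meet {v : Fin F.m} (hm : π.meet i j v) : π.sepAt i j v.val := by
  rintro p l hlk ⟨h1, h2⟩
  rcases eq_or_lt_of_le h2 with heq | hlt
  · have : l = v := Fin.ext heq.symm
    exact π.meet_no_incoming i j hm (this ▸ hlk)
  · have hmv : π.traj i v.val ∈ F.Iset p l := by
      rw [π.traj_stay i (p.val + 1) (Nat.lt_succ_self _) hlk.2.2.1 v.val (by omega)
        (by omega)]
      exact hlk.2.2.1
    exact (mem_Iset_iff.mp hmv).2 v (Fin.lt_def.mpr h1) (Fin.lt_def.mpr hlt)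
      ⟨hm.2.1.1, hm.2.1.2⟩

lemma inv_parity (hij : i ≠ j) :
    ∀ q : ℕ, π.sepAt i j q →
      ((π.traj i q < π.traj j q ↔ π.traj i 0 < π.traj j 0) ↔ Even (π.ncross i j q)) := by
  intro q
  induction q using Nat.strong_induction_on with
  | _ q IH =>
    cases q with
    | zero =>
      intro _
      have hempty : {pl : Fin F.m × Fin F.m | π.crossPair i j pl.1 pl.2 ∧ pl.2.val < 0} = ∅ := by
        ext pl; simp
      rw [ncross, hempty, Set.ncard_empty]
      exact iff_of_true Iff.rfl Even.zero
    | succ q =>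
      intro hsep
      by_cases hq2 : ∀ v : Fin F.m, v.val = q → ¬ (π.enters i v ∧ π.enters j v)
      · -- no double entry at star `q`
        have hmem : ¬ (F.memI q (π.traj i q) ∧ F.memI q (π.traj j q)) := by
          rintro ⟨⟨h1, hio⟩, ⟨h2, hjo⟩⟩
          exact hq2 ⟨q, h1⟩ rfl ⟨hio, hjo⟩
        have hord := π.ord_stable i j q hmem
        have hsep' : π.sepAt i j q := by
          rintro p l hlk ⟨h1, h2⟩
          rcases eq_or_lt_of_le h2 with heq | hlt
          · exact hq2 l heq.symm (π.linked_enters_end i j hlk)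
          · exact hsep p l hlk ⟨by omega, hlt⟩
        have hN : π.ncross i j (q + 1) = π.ncross i j q := by
          unfold ncross
          congr 1
          ext pl
          simp only [Set.mem_setOf_eq]
          constructor
          · rintro ⟨hc, hlt⟩
            refine ⟨hc, ?_⟩
            rcases Nat.lt_succ_iff_lt_or_eq.mp hlt with h | h
            · exact h
            · exact absurd (π.cross_end_enters i j hc) (hq2 pl.2 h)
          · rintro ⟨hc, hlt⟩
            exact ⟨hc, by omega⟩
        rw [hN, ← IH q (Nat.lt_succ_self q) hsep']
        exact iff_congr hord Iff.rfl
      · -- both paths enter the star `x_v` with `v.val = q`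
        push_neg at hq2
        obtain ⟨v, hvq, hvi, hvj⟩ := hq2
        have hterm : ∀ l', ¬ π.linked i j v l' := by
          intro l' hl'
          have hvl : v.val < l'.val := hl'.1
          exact hsep v l' hl' ⟨by omega, by omega⟩
        obtain ⟨p0, hm0, hch⟩ := π.backtrace i j hij v hvi hvj
        have hp0v : p0.val ≤ v.val := π.chain_le i j hch
        have hsep0 := π.sep_of_meet i j hm0
        have hIH := IH p0.val (by omega) hsep0
        have hcrossiff : π.crossPair i j p0 v ↔
            ¬ (π.traj i p0.val < π.traj j p0.val ↔
               π.traj i (v.val + 1) < π.traj j (v.val + 1)) := by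
          constructor
          · exact fun h => h.2.2.2
          · intro h; exact ⟨hm0, hch, hterm, h⟩
        have honly : ∀ pl : Fin F.m × Fin F.m, π.crossPair i j pl.1 pl.2 →
            pl.2.val < q + 1 → pl.2.val < p0.val ∨ pl = (p0, v) := by
          rintro ⟨p', l'⟩ hc hlt
          have hlt' : l'.val < q + 1 := hlt
          rcases lt_or_ge l'.val p0.val with h | h
          · exact Or.inl h
          · right
            have hlv : l' ≤ v := Fin.le_def.mpr (by omega)
            rcases π.chain_cover i j hch l' (Fin.le_def.mpr h) hlv with
              hx | ⟨pp, ll, hlk2, hplt, hllt, -⟩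
            · rcases Relation.ReflTransGen.cases_head hx with heq | ⟨y, hy, -⟩
              · subst heq
                have hp'eq := π.chain_start_unique i j l' p' p0 hc.2.1 hch hc.1 hm0
                rw [hp'eq]
              · exact absurd hy (hc.2.2.1 y)
            · exfalso
              have hend := π.cross_end_enters i j hc
              have hmemv : π.traj i l'.val ∈ F.Iset pp ll := by
                rw [π.traj_stay i (pp.val + 1) (Nat.lt_succ_self _) hlk2.2.2.1 l'.val
                  (by have := Fin.lt_def.mp hplt; omega)
                  (le_of_lt (Fin.lt_def.mp hllt))]
                exact hlk2.2.2.1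
              exact (mem_Iset_iff.mp hmemv).2 l' hplt hllt ⟨hend.1.1, hend.1.2⟩
        by_cases hflip : π.crossPair i j p0 v
        · have hU : {pl : Fin F.m × Fin F.m | π.crossPair i j pl.1 pl.2 ∧ pl.2.val < q + 1}
              = insert (p0, v)
                {pl : Fin F.m × Fin F.m | π.crossPair i j pl.1 pl.2 ∧ pl.2.val < p0.val} := by
            ext pl
            simp only [Set.mem_setOf_eq, Set.mem_insert_iff]
            constructor
            · rintro ⟨hc, hlt⟩
              rcases honly pl hc hlt with h | h
              · exact Or.inr ⟨hc, h⟩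
              · exact Or.inl h
            · rintro (rfl | ⟨hc, hlt⟩)
              · exact ⟨hflip, show v.val < q + 1 by omega⟩
              · have hlt2 : pl.2.val < p0.val := hlt
                exact ⟨hc, by omega⟩
          have hnm : (p0, v) ∉
              {pl : Fin F.m × Fin F.m | π.crossPair i j pl.1 pl.2 ∧ pl.2.val < p0.val} := by
            simp only [Set.mem_setOf_eq]
            rintro ⟨-, hlt⟩
            omega
          have hNval : π.ncross i j (q + 1) = π.ncross i j p0.val + 1 := by
            unfold ncross
            rw [hU, Set.ncard_insert_of_notMem hnm]
          have hflip' := hcrossiff.mp hflip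
          have hvq1 : v.val + 1 = q + 1 := by omega
          rw [hvq1] at hflip'
          rw [hNval, Nat.even_add_one, ← hIH]
          tauto
        · have hU : {pl : Fin F.m × Fin F.m | π.crossPair i j pl.1 pl.2 ∧ pl.2.val < q + 1}
              = {pl : Fin F.m × Fin F.m | π.crossPair i j pl.1 pl.2 ∧ pl.2.val < p0.val} := by
            ext pl
            simp only [Set.mem_setOf_eq]
            constructor
            · rintro ⟨hc, hlt⟩
              rcases honly pl hc hlt with h | h
              · exact ⟨hc, h⟩
              · subst h; exact absurd hc hflip
            · rintro ⟨hc, hlt⟩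
              have hlt2 : pl.2.val < p0.val := hlt
              exact ⟨hc, by omega⟩
          have hNval : π.ncross i j (q + 1) = π.ncross i j p0.val := by
            unfold ncross
            rw [hU]
          have h2 : ¬¬ (π.traj i p0.val < π.traj j p0.val ↔
              π.traj i (v.val + 1) < π.traj j (v.val + 1)) :=
            fun hh => hflip (hcrossiff.mpr hh)
          have h3 := not_not.mp h2
          have hvq1 : v.val + 1 = q + 1 := by omega
          rw [hvq1] at h3
          rw [hNval, ← hIH]
          exact iff_congr h3.symm Iff.rfl

/-- A defect forces inverted vertical order at the meeting vertex. -/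
lemma defect_flip {k : Fin F.m} (h : π.defect i j k) :
    π.traj j k.val < π.traj i k.val := by
  obtain ⟨hij, hm, hodd⟩ := h
  have hij' : i ≠ j := hm.1
  have hsep := π.sep_of_meet i j hm
  have hinv := π.inv_parity i j hij' k.val hsep
  have hNC : π.ncross i j k.val = π.crossBefore i j k := rfl
  rw [hNC] at hinv
  have h0 : π.traj i 0 < π.traj j 0 := by
    rw [π.init, π.init]; exact hij
  have hne : π.traj i k.val ≠ π.traj j k.val := fun he => hij' (π.inj k.val he)
  have hnev : ¬ Even (π.crossBefore i j k) := by
    rcases Nat.even_or_odd (π.crossBefore i j k) with he | ho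
    · exfalso
      obtain ⟨a, ha⟩ := he
      obtain ⟨b, hb⟩ := hodd
      omega
    · intro he
      obtain ⟨a, ha⟩ := he
      obtain ⟨b, hb⟩ := ho
      omega
  have hnlt : ¬ (π.traj i k.val < π.traj j k.val) := by
    intro hlt
    exact hnev (hinv.mp (iff_of_true hlt h0))
  exact lt_of_le_of_ne (not_lt.mp hnlt) (Ne.symm hne)

end Raw
end StarNetwork
/-- **Lemma 4.5** (Parisi–Skandera–Spahiu–Wang).  The map `ψ : D(π) → D(π̂)`
is injective. -/
theorem psiMap_injective
    {n : ℕ} (F : StarNetwork n) (π : F.Raw) (k : Fin F.m)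
    -- `π` has a defect at `x_k`, and `(r,t)` is the lexicographically least
    -- pair with `(π_r, π_t, k)` a defect (step 1)
    (r t : Fin n) (hrt : π.defect r t k)
    (hrtmin : ∀ r' t' : Fin n, π.defect r' t' k →
      r < r' ∨ (r = r' ∧ t ≤ t'))
    -- `s` is the largest index such that `π_s` enters `x_k` through the same
    -- edge as `π_r` and `(π_s, π_t, k)` is a defect (step 2)
    (s : Fin n) (hsr : π.simAt s r k) (hst : π.defect s t k)
    (hsmax : ∀ s' : Fin n, π.simAt s' r k → π.defect s' t k → s' ≤ s)
    -- `x_l` is the final vertex of the rightmost crossing of `π_s` and `π_t`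
    -- prior to `x_k` (step 3)
    (l : Fin F.m) (hlcross : ∃ p, π.crossPair s t p l) (hlk : l < k)
    (hlmax : ∀ p' l' : Fin F.m, π.crossPair s t p' l' → l' < k → l' ≤ l)
    -- `π̂ = φ_k(π)` is obtained from `π` by exchanging the `x_l`-to-`x_k`
    -- subpaths of `π_s` and `π_t` (step 4)
    (πh : F.Raw)
    (htraj : ∀ (i : Fin n) (q : ℕ), πh.traj i q =
      if i = s ∧ l.val + 1 ≤ q ∧ q ≤ k.val then π.traj t q
      else if i = t ∧ l.val + 1 ≤ q ∧ q ≤ k.val then π.traj s q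
      else π.traj i q) :
    Set.InjOn (π.psiMap k s t) (π.Dset k s t) := by
  classical
  intro p hp q hq hpq
  -- a defect `(a,b,k)` forces inverted order, so `π_a ≾_k π_b` is impossible
  have key : ∀ a b : Fin n, π.defect a b k → π.precsimAt a b k → False := by
    intro a b hd hps
    have hflip := π.defect_flip a b hd
    rcases hps with hpa | hsa
    · exact absurd hpa.2.2.2 (not_lt.mpr (le_of_lt hflip))
    · rcases hsa.2.2 with heq | hse
      · exact hd.2.1.1 heq
      · exact hd.2.1.2.2.2 hse
  simp only [StarNetwork.Raw.psiMap] at hpq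
  by_cases hc1p : p ∈ π.blockC1 k s t
  · rw [if_pos hc1p] at hpq
    by_cases hc1q : q ∈ π.blockC1 k s t
    · rw [if_pos hc1q] at hpq
      have h2 := congrArg Prod.snd hpq
      exact Prod.ext (hc1p.2.1.trans hc1q.2.1.symm) h2
    · rw [if_neg hc1q] at hpq
      by_cases hc2q : q ∈ π.blockC2 k s t
      · rw [if_pos hc2q] at hpq
        exfalso
        have h1 : q.1 = t := (congrArg Prod.fst hpq).symm
        have h2 : q.1 < q.2 := hq.1.1
        rw [hc2q.2.1, ← h1] at h2
        exact lt_irrefl _ h2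
      · rw [if_neg hc2q] at hpq
        exfalso
        subst hpq
        exact key t p.2 hq.1 hc1p.2.2.1
  · rw [if_neg hc1p] at hpq
    by_cases hc2p : p ∈ π.blockC2 k s t
    · rw [if_pos hc2p] at hpq
      by_cases hc1q : q ∈ π.blockC1 k s t
      · rw [if_pos hc1q] at hpq
        exfalso
        have h1 : p.1 = t := congrArg Prod.fst hpq
        have h2 : p.1 < p.2 := hp.1.1
        rw [hc2p.2.1, ← h1] at h2
        exact lt_irrefl _ h2
      · rw [if_neg hc1q] at hpq
        by_cases hc2q : q ∈ π.blockC2 k s t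
        · rw [if_pos hc2q] at hpq
          have h1 := congrArg Prod.fst hpq
          exact Prod.ext h1 (hc2p.2.1.trans hc2q.2.1.symm)
        · rw [if_neg hc2q] at hpq
          exfalso
          subst hpq
          exact key p.1 s hq.1 hc2p.2.2.2.1
    · rw [if_neg hc2p] at hpq
      by_cases hc1q : q ∈ π.blockC1 k s t
      · rw [if_pos hc1q] at hpq
        exfalso
        subst hpq
        exact key t q.2 hp.1 hc1q.2.2.1
      · rw [if_neg hc1q] at hpq
        by_cases hc2q : q ∈ π.blockC2 k s t
        · rw [if_pos hc2q] at hpq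
          exfalso
          subst hpq
          exact key q.1 s hp.1 hc2q.2.2.2.1
        · rw [if_neg hc2q] at hpq
          exact hpq
end
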